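/- For every odd k ≥ 3 and every r ≥ 2, and for every 1 ≤ l ≤ r−1, the number cos((2l−1)π/(2(r−1))) is an eigenvalue of the transition matrix T of the graph G(k,r). -/

import Mathlib

open Matrix

attribute [local instance] Classical.propDecidable

namespace GroverPaper

variable {V : Type*}

/-- The arc set of a simple graph: ordered pairs of adjacent vertices. -/
abbrev Arc (G : SimpleGraph V) : Type _ := {p : V × V // G.Adj p.1 p.2}

/-- The time evolution matrix of the Grover walk on a graph `G`. -/
noncomputable def groverU [Fintype V] (G : SimpleGraph V) :
    Matrix (Arc G) (Arc G) ℂ := fun e f =>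
  if f.val.2 = e.val.1 then
    if e.val = (f.val.2, f.val.1) then 2 / (G.degree f.val.2 : ℂ) - 1
    else 2 / (G.degree f.val.2 : ℂ)
  else 0

/-- A graph is periodic if some positive power of its Grover evolution is the identity. -/
def IsPeriodic [Fintype V] (G : SimpleGraph V) : Prop :=
  ∃ k : ℕ, 0 < k ∧ groverU G ^ k = 1

/-- The period of a periodic graph: the least positive `k` with `U^k = 1`. -/
noncomputable def period [Fintype V] (G : SimpleGraph V) : ℕ :=
  sInf {k : ℕ | 0 < k ∧ groverU G ^ k = 1}

/-- A graph is `k`-periodic if it is periodic with period `k`. -/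
def IsKPeriodic [Fintype V] (G : SimpleGraph V) (k : ℕ) : Prop :=
  IsPeriodic G ∧ period G = k

/-- A graph is odd-periodic if it is periodic with odd period. -/
def IsOddPeriodic [Fintype V] (G : SimpleGraph V) : Prop :=
  IsPeriodic G ∧ Odd (period G)

/-- The transition matrix of the isotropic random walk on `G`. -/
noncomputable def transition [Fintype V] (G : SimpleGraph V) :
    Matrix V V ℝ := fun u v =>
  if G.Adj u v then 1 / (G.degree u : ℝ) else 0

/-- Vertex set of the graph `G(k,r)`: the cycle part and two path parts. -/
abbrev GkrVertex (k r : ℕ) : Type := ZMod k ⊕ (Fin (r - 1) ⊕ Fin (r - 1))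

/-- The graph `G(k,r)` obtained by identifying one vertex of the cycle `C_k` with one endpoint
of each of two disjoint paths on `r` vertices. Here `Sum.inl x` are the cycle vertices
(`Sum.inl 0` being the identified vertex `u`), and `Sum.inr (Sum.inl j)` (resp.
`Sum.inr (Sum.inr j)`) is the `(j+1)`-st vertex of the first (resp. second) path. -/
def Gkr (k r : ℕ) : SimpleGraph (GkrVertex k r) :=
  SimpleGraph.fromRel fun a b =>
    match a, b with
    | Sum.inl x, Sum.inl y => y = x + 1
    | Sum.inl x, Sum.inr (Sum.inl j) => x = 0 ∧ (j : ℕ) = 0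
    | Sum.inl x, Sum.inr (Sum.inr j) => x = 0 ∧ (j : ℕ) = 0
    | Sum.inr (Sum.inl i), Sum.inr (Sum.inl j) => (j : ℕ) = (i : ℕ) + 1
    | Sum.inr (Sum.inr i), Sum.inr (Sum.inr j) => (j : ℕ) = (i : ℕ) + 1
    | _, _ => False

section Aux

variable {k r : ℕ}

lemma Gkr_adj_cp (x : ZMod k) (j : Fin (r-1)) :
    (Gkr k r).Adj (Sum.inl x) (Sum.inr (Sum.inl j)) ↔ x = 0 ∧ (j:ℕ) = 0 := by
  simp [Gkr, SimpleGraph.fromRel_adj]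

lemma Gkr_adj_cq (x : ZMod k) (j : Fin (r-1)) :
    (Gkr k r).Adj (Sum.inl x) (Sum.inr (Sum.inr j)) ↔ x = 0 ∧ (j:ℕ) = 0 := by
  simp [Gkr, SimpleGraph.fromRel_adj]

lemma Gkr_adj_pp (i j : Fin (r-1)) :
    (Gkr k r).Adj (Sum.inr (Sum.inl i)) (Sum.inr (Sum.inl j)) ↔
      ((j:ℕ) = (i:ℕ) + 1 ∨ (i:ℕ) = (j:ℕ) + 1) := by
  simp only [Gkr, SimpleGraph.fromRel_adj, ne_eq, Sum.inr.injEq, Sum.inl.injEq]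
  constructor
  · rintro ⟨-, h⟩; exact h
  · rintro h
    refine ⟨fun hij => ?_, h⟩
    subst hij; omega

lemma Gkr_adj_qq (i j : Fin (r-1)) :
    (Gkr k r).Adj (Sum.inr (Sum.inr i)) (Sum.inr (Sum.inr j)) ↔
      ((j:ℕ) = (i:ℕ) + 1 ∨ (i:ℕ) = (j:ℕ) + 1) := by
  simp only [Gkr, SimpleGraph.fromRel_adj, ne_eq, Sum.inr.injEq, Sum.inr.injEq]
  constructor
  · rintro ⟨-, h⟩; exact h
  · rintro h
    refine ⟨fun hij => ?_, h⟩
    subst hij; omega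

lemma Gkr_adj_pq (i j : Fin (r-1)) :
    ¬ (Gkr k r).Adj (Sum.inr (Sum.inl i)) (Sum.inr (Sum.inr j)) := by
  simp [Gkr, SimpleGraph.fromRel_adj]

end Aux

lemma Gkr_adj_pc (i : Fin (r-1)) (x : ZMod k) :
    (Gkr k r).Adj (Sum.inr (Sum.inl i)) (Sum.inl x) ↔ x = 0 ∧ (i:ℕ) = 0 := by
  rw [SimpleGraph.adj_comm]; exact Gkr_adj_cp x i

lemma Gkr_adj_qc (i : Fin (r-1)) (x : ZMod k) :
    (Gkr k r).Adj (Sum.inr (Sum.inr i)) (Sum.inl x) ↔ x = 0 ∧ (i:ℕ) = 0 := by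
  rw [SimpleGraph.adj_comm]; exact Gkr_adj_cq x i

lemma Gkr_adj_qp (i j : Fin (r-1)) :
    ¬ (Gkr k r).Adj (Sum.inr (Sum.inr i)) (Sum.inr (Sum.inl j)) := by
  rw [SimpleGraph.adj_comm]; exact Gkr_adj_pq j i

lemma Gkr_deg_p [NeZero k] (i : Fin (r-1)) :
    (Gkr k r).degree (Sum.inr (Sum.inl i)) = if (i:ℕ)+1 < r-1 then 2 else 1 := by
  have hn : (i:ℕ) < r - 1 := i.isLt
  classical
  rw [← SimpleGraph.card_neighborFinset_eq_degree]
  by_cases h1 : (i:ℕ)+1 < r-1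
  · by_cases h0 : (i:ℕ) = 0
    · have hset : (Gkr k r).neighborFinset (Sum.inr (Sum.inl i)) =
        {Sum.inl 0, Sum.inr (Sum.inl ⟨(i:ℕ)+1, h1⟩)} := by
        ext b
        rcases b with x | (j | j) <;>
          simp only [SimpleGraph.mem_neighborFinset, Gkr_adj_pc, Gkr_adj_pp, Gkr_adj_pq,
            Finset.mem_insert, Finset.mem_singleton, Sum.inl.injEq, Sum.inr.injEq,
            Fin.ext_iff, reduceCtorEq, or_false, false_or, iff_false] <;>
          first | tauto | omega
      rw [hset, if_pos h1]
      rw [Finset.card_insert_of_notMem (by simp), Finset.card_singleton]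
    · have hset : (Gkr k r).neighborFinset (Sum.inr (Sum.inl i)) =
        {Sum.inr (Sum.inl ⟨(i:ℕ)-1, by omega⟩), Sum.inr (Sum.inl ⟨(i:ℕ)+1, h1⟩)} := by
        ext b
        rcases b with x | (j | j) <;>
          simp only [SimpleGraph.mem_neighborFinset, Gkr_adj_pc, Gkr_adj_pp, Gkr_adj_pq,
            Finset.mem_insert, Finset.mem_singleton, Sum.inl.injEq, Sum.inr.injEq,
            Fin.ext_iff, reduceCtorEq, or_false, false_or, iff_false, false_iff] <;>
          first | tauto | omega
      rw [hset, if_pos h1]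
      rw [Finset.card_insert_of_notMem (by simp only [Finset.mem_singleton, Sum.inr.injEq, Sum.inl.injEq, Fin.mk.injEq]; omega), Finset.card_singleton]
  · by_cases h0 : (i:ℕ) = 0
    · have hset : (Gkr k r).neighborFinset (Sum.inr (Sum.inl i)) = {Sum.inl 0} := by
        ext b
        rcases b with x | (j | j) <;>
          simp only [SimpleGraph.mem_neighborFinset, Gkr_adj_pc, Gkr_adj_pp, Gkr_adj_pq,
            Finset.mem_singleton, Sum.inl.injEq, Sum.inr.injEq,
            Fin.ext_iff, reduceCtorEq, iff_false, false_iff] <;>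
          first | tauto | omega
      rw [hset, if_neg h1, Finset.card_singleton]
    · have hset : (Gkr k r).neighborFinset (Sum.inr (Sum.inl i)) =
        {Sum.inr (Sum.inl ⟨(i:ℕ)-1, by omega⟩)} := by
        ext b
        rcases b with x | (j | j) <;>
          simp only [SimpleGraph.mem_neighborFinset, Gkr_adj_pc, Gkr_adj_pp, Gkr_adj_pq,
            Finset.mem_singleton, Sum.inl.injEq, Sum.inr.injEq,
            Fin.ext_iff, reduceCtorEq, iff_false, false_iff] <;>
          first | tauto | omega
      rw [hset, if_neg h1, Finset.card_singleton]

lemma Gkr_deg_q [NeZero k] (i : Fin (r-1)) :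
    (Gkr k r).degree (Sum.inr (Sum.inr i)) = if (i:ℕ)+1 < r-1 then 2 else 1 := by
  have hn : (i:ℕ) < r - 1 := i.isLt
  classical
  rw [← SimpleGraph.card_neighborFinset_eq_degree]
  by_cases h1 : (i:ℕ)+1 < r-1
  · by_cases h0 : (i:ℕ) = 0
    · have hset : (Gkr k r).neighborFinset (Sum.inr (Sum.inr i)) =
        {Sum.inl 0, Sum.inr (Sum.inr ⟨(i:ℕ)+1, h1⟩)} := by
        ext b
        rcases b with x | (j | j) <;>
          simp only [SimpleGraph.mem_neighborFinset, Gkr_adj_qc, Gkr_adj_qq, Gkr_adj_qp,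
            Finset.mem_insert, Finset.mem_singleton, Sum.inl.injEq, Sum.inr.injEq,
            Fin.ext_iff, reduceCtorEq, or_false, false_or, iff_false] <;>
          first | tauto | omega
      rw [hset, if_pos h1]
      rw [Finset.card_insert_of_notMem (by simp), Finset.card_singleton]
    · have hset : (Gkr k r).neighborFinset (Sum.inr (Sum.inr i)) =
        {Sum.inr (Sum.inr ⟨(i:ℕ)-1, by omega⟩), Sum.inr (Sum.inr ⟨(i:ℕ)+1, h1⟩)} := by
        ext b
        rcases b with x | (j | j) <;>
          simp only [SimpleGraph.mem_neighborFinset, Gkr_adj_qc, Gkr_adj_qq, Gkr_adj_qp,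
            Finset.mem_insert, Finset.mem_singleton, Sum.inl.injEq, Sum.inr.injEq,
            Fin.ext_iff, reduceCtorEq, or_false, false_or, iff_false, false_iff] <;>
          first | tauto | omega
      rw [hset, if_pos h1]
      rw [Finset.card_insert_of_notMem (by simp only [Finset.mem_singleton, Sum.inr.injEq, Sum.inl.injEq, Fin.mk.injEq]; omega), Finset.card_singleton]
  · by_cases h0 : (i:ℕ) = 0
    · have hset : (Gkr k r).neighborFinset (Sum.inr (Sum.inr i)) = {Sum.inl 0} := by
        ext b
        rcases b with x | (j | j) <;>
          simp only [SimpleGraph.mem_neighborFinset, Gkr_adj_qc, Gkr_adj_qq, Gkr_adj_qp,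
            Finset.mem_singleton, Sum.inl.injEq, Sum.inr.injEq,
            Fin.ext_iff, reduceCtorEq, iff_false, false_iff] <;>
          first | tauto | omega
      rw [hset, if_neg h1, Finset.card_singleton]
    · have hset : (Gkr k r).neighborFinset (Sum.inr (Sum.inr i)) =
        {Sum.inr (Sum.inr ⟨(i:ℕ)-1, by omega⟩)} := by
        ext b
        rcases b with x | (j | j) <;>
          simp only [SimpleGraph.mem_neighborFinset, Gkr_adj_qc, Gkr_adj_qq, Gkr_adj_qp,
            Finset.mem_singleton, Sum.inl.injEq, Sum.inr.injEq,
            Fin.ext_iff, reduceCtorEq, iff_false, false_iff] <;>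
          first | tauto | omega
      rw [hset, if_neg h1, Finset.card_singleton]

lemma Gkr_key (hr : 2 ≤ r) (θ : ℝ) (g : ℕ → ℝ) (hg0 : g 0 = 0)
    (hrec : ∀ m, g m + g (m+2) = 2 * Real.cos θ * g (m+1))
    (hend : g (r-1-1) = Real.cos θ * g (r-1))
    (d : ℝ) (i : Fin (r-1)) (hd : d = if (i:ℕ)+1 < r-1 then (2:ℝ) else 1) :
    ∑ j : Fin (r-1), (if ((j:ℕ) = (i:ℕ)+1 ∨ (i:ℕ) = (j:ℕ)+1) then (1/d) * g ((j:ℕ)+1) else 0)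
      = Real.cos θ * g ((i:ℕ)+1) := by
  have hi : (i:ℕ) < r - 1 := i.isLt
  by_cases h1 : (i:ℕ)+1 < r-1
  · rw [if_pos h1] at hd
    by_cases h0 : (i:ℕ) = 0
    · rw [Finset.sum_eq_single_of_mem (⟨(i:ℕ)+1, h1⟩ : Fin (r-1)) (Finset.mem_univ _)
        (by intro b _ hb
            have hb' : (b:ℕ) ≠ (i:ℕ)+1 := fun h => hb (Fin.ext h)
            exact if_neg (by omega))]
      rw [if_pos (by left; rfl)]
      show (1/d) * g ((i:ℕ)+1+1) = Real.cos θ * g ((i:ℕ)+1)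
      have hgi : g ((i:ℕ)) = 0 := by rw [h0]; exact hg0
      have h2 := hrec (i:ℕ)
      rw [hd]; linarith
    · rw [Finset.sum_eq_add_of_mem (⟨(i:ℕ)-1, by omega⟩ : Fin (r-1)) (⟨(i:ℕ)+1, h1⟩ : Fin (r-1))
        (Finset.mem_univ _) (Finset.mem_univ _)
        (by simp only [ne_eq, Fin.mk.injEq]; omega)
        (by intro c _ hc
            obtain ⟨hc1, hc2⟩ := hc
            have hc1' : (c:ℕ) ≠ (i:ℕ)-1 := fun h => hc1 (Fin.ext h)
            have hc2' : (c:ℕ) ≠ (i:ℕ)+1 := fun h => hc2 (Fin.ext h)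
            exact if_neg (by omega))]
      rw [if_pos (by right; show (i:ℕ) = (i:ℕ)-1+1; omega), if_pos (by left; rfl)]
      show (1/d) * g ((i:ℕ)-1+1) + (1/d) * g ((i:ℕ)+1+1) = Real.cos θ * g ((i:ℕ)+1)
      have e1 : (i:ℕ)-1+1 = (i:ℕ) := by omega
      rw [e1, hd]
      have h2 := hrec (i:ℕ)
      linarith
  · rw [if_neg h1] at hd
    have hieq : (i:ℕ)+1 = r-1 := by omega
    by_cases h0 : (i:ℕ) = 0
    · rw [Finset.sum_eq_zero (by
        intro b _
        have hb : (b:ℕ) < r - 1 := b.isLt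
        exact if_neg (by omega))]
      have e0 : r - 1 - 1 = 0 := by omega
      rw [e0, hg0] at hend
      have e1 : (i:ℕ)+1 = r-1 := hieq
      rw [e1]
      exact hend
    · rw [Finset.sum_eq_single_of_mem (⟨(i:ℕ)-1, by omega⟩ : Fin (r-1)) (Finset.mem_univ _)
        (by intro b _ hb
            have hb' : (b:ℕ) ≠ (i:ℕ)-1 := fun h => hb (Fin.ext h)
            have hblt : (b:ℕ) < r - 1 := b.isLt
            exact if_neg (by omega))]
      rw [if_pos (by right; show (i:ℕ) = (i:ℕ)-1+1; omega), hd]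
      show (1/(1:ℝ)) * g ((i:ℕ)-1+1) = Real.cos θ * g ((i:ℕ)+1)
      have e1 : (i:ℕ)-1+1 = r-1-1 := by omega
      rw [e1, hend, hieq]
      ring

/-- For every odd `k ≥ 3`, every `r ≥ 2` and every `1 ≤ l ≤ r - 1`, the
number `cos((2l-1)π/(2(r-1)))` is an eigenvalue of the transition matrix of `G(k,r)`. -/
theorem Gkr_eigenvalue (k r : ℕ) [NeZero k] (hk3 : 3 ≤ k) (hkodd : Odd k) (hr : 2 ≤ r)
    (l : ℕ) (hl1 : 1 ≤ l) (hl2 : l ≤ r - 1) :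
    Real.cos ((2 * (l : ℝ) - 1) * Real.pi / (2 * ((r : ℝ) - 1))) ∈
      spectrum ℝ (transition (Gkr k r)) := by
  classical
  set θ : ℝ := (2 * (l : ℝ) - 1) * Real.pi / (2 * ((r : ℝ) - 1)) with hθ
  have hn1 : 1 ≤ r - 1 := by omega
  have hrn : ((r:ℝ) - 1) = ((r-1 : ℕ) : ℝ) := by
    rw [Nat.cast_sub (by omega : 1 ≤ r)]; norm_num
  have hrpos : (0:ℝ) < (r:ℝ) - 1 := by
    have : (2:ℝ) ≤ (r:ℝ) := by exact_mod_cast hr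
    linarith
  set g : ℕ → ℝ := fun m => Real.sin (m * θ) with hg
  have hg0 : g 0 = 0 := by simp [hg]
  have hrec : ∀ m, g m + g (m+2) = 2 * Real.cos θ * g (m+1) := by
    intro m
    simp only [hg]
    push_cast
    have e1 : ((m:ℝ)+2)*θ = ((m:ℝ)+1)*θ + θ := by ring
    have e2 : (m:ℝ)*θ = ((m:ℝ)+1)*θ - θ := by ring
    rw [e1, e2, Real.sin_add, Real.sin_sub]; ring
  have hcosn : Real.cos (((r-1:ℕ):ℝ) * θ) = 0 := by
    have e : ((r-1:ℕ):ℝ) * θ = (2*((l:ℤ)-1)+1) * Real.pi / 2 := by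
      rw [← hrn, hθ]
      push_cast
      field_simp
      ring
    rw [e]
    exact Real.cos_eq_zero_iff.mpr ⟨(l:ℤ)-1, by push_cast; ring⟩
  have hend : g (r-1-1) = Real.cos θ * g (r-1) := by
    have hc : ((r-1-1:ℕ):ℝ) = ((r-1:ℕ):ℝ) - 1 := by
      rw [Nat.cast_sub hn1]; norm_num
    simp only [hg]
    rw [hc]
    have e : (((r-1:ℕ):ℝ) - 1) * θ = ((r-1:ℕ):ℝ) * θ - θ := by ring
    rw [e, Real.sin_sub, hcosn]; ring
  set f : GkrVertex k r → ℝ :=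
    Sum.elim (fun _ => 0) (Sum.elim (fun j => g ((j:ℕ)+1)) (fun j => -g ((j:ℕ)+1))) with hf
  have hθpos : 0 < θ := by
    apply div_pos
    · apply mul_pos _ Real.pi_pos
      have : (1:ℝ) ≤ (l:ℝ) := by exact_mod_cast hl1
      linarith
    · linarith
  have hθlt : θ < Real.pi := by
    rw [hθ, div_lt_iff₀ (by linarith)]
    have hlr : (l:ℝ) ≤ (r:ℝ) - 1 := by
      rw [hrn]; exact_mod_cast hl2
    nlinarith [Real.pi_pos]
  have hfne : f ≠ 0 := by
    intro h
    have h0 := congrFun h (Sum.inr (Sum.inl ⟨0, by omega⟩))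
    simp only [hf, Sum.elim_inr, Sum.elim_inl, Pi.zero_apply] at h0
    have h1 : Real.sin θ = 0 := by
      have := h0
      simp only [hg] at this
      norm_num at this
      exact this
    have hs : 0 < Real.sin θ := Real.sin_pos_of_pos_of_lt_pi hθpos hθlt
    linarith
  have hmain : transition (Gkr k r) *ᵥ f = Real.cos θ • f := by
    funext a
    have expand : (transition (Gkr k r) *ᵥ f) a
        = (∑ x : ZMod k, transition (Gkr k r) a (Sum.inl x) * f (Sum.inl x))
        + ((∑ j : Fin (r-1), transition (Gkr k r) a (Sum.inr (Sum.inl j)) * f (Sum.inr (Sum.inl j)))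
        + (∑ j : Fin (r-1), transition (Gkr k r) a (Sum.inr (Sum.inr j)) * f (Sum.inr (Sum.inr j)))) := by
      rw [Matrix.mulVec, dotProduct, Fintype.sum_sum_type, Fintype.sum_sum_type]
    rcases a with x | (i | i)
    · rw [expand]
      have s1 : (∑ y : ZMod k,
          transition (Gkr k r) (Sum.inl x) (Sum.inl y) * f (Sum.inl y)) = 0 :=
        Finset.sum_eq_zero (fun y _ => by simp [hf])
      have s23 : ((∑ j : Fin (r-1),
            transition (Gkr k r) (Sum.inl x) (Sum.inr (Sum.inl j)) * f (Sum.inr (Sum.inl j)))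
          + (∑ j : Fin (r-1),
            transition (Gkr k r) (Sum.inl x) (Sum.inr (Sum.inr j)) * f (Sum.inr (Sum.inr j)))) = 0 := by
        rw [← Finset.sum_add_distrib]
        apply Finset.sum_eq_zero
        intro j _
        have hT : transition (Gkr k r) (Sum.inl x) (Sum.inr (Sum.inl j))
            = transition (Gkr k r) (Sum.inl x) (Sum.inr (Sum.inr j)) := by
          simp only [transition, Gkr_adj_cp, Gkr_adj_cq]
        simp only [hf, Sum.elim_inr, Sum.elim_inl]
        rw [hT]; ring
      rw [s1, s23]
      simp [hf]
    · rw [expand]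
      have s1 : (∑ y : ZMod k,
          transition (Gkr k r) (Sum.inr (Sum.inl i)) (Sum.inl y) * f (Sum.inl y)) = 0 :=
        Finset.sum_eq_zero (fun y _ => by simp [hf])
      have s3 : (∑ j : Fin (r-1),
          transition (Gkr k r) (Sum.inr (Sum.inl i)) (Sum.inr (Sum.inr j)) * f (Sum.inr (Sum.inr j))) = 0 :=
        Finset.sum_eq_zero (fun j _ => by simp [transition, Gkr_adj_pq i j])
      have s2 : (∑ j : Fin (r-1),
          transition (Gkr k r) (Sum.inr (Sum.inl i)) (Sum.inr (Sum.inl j)) * f (Sum.inr (Sum.inl j)))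
          = Real.cos θ * g ((i:ℕ)+1) := by
        refine (Finset.sum_congr rfl (fun j _ => ?_)).trans
          (Gkr_key hr θ g hg0 hrec hend _ i rfl)
        simp only [transition, Gkr_adj_pp, Gkr_deg_p, hf, Sum.elim_inr, Sum.elim_inl,
          Nat.cast_ite, Nat.cast_ofNat, Nat.cast_one, ite_mul, zero_mul]
      rw [s1, s2, s3]
      simp [hf]
    · rw [expand]
      have s1 : (∑ y : ZMod k,
          transition (Gkr k r) (Sum.inr (Sum.inr i)) (Sum.inl y) * f (Sum.inl y)) = 0 :=
        Finset.sum_eq_zero (fun y _ => by simp [hf])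
      have s2 : (∑ j : Fin (r-1),
          transition (Gkr k r) (Sum.inr (Sum.inr i)) (Sum.inr (Sum.inl j)) * f (Sum.inr (Sum.inl j))) = 0 :=
        Finset.sum_eq_zero (fun j _ => by simp [transition, Gkr_adj_qp i j])
      have s3 : (∑ j : Fin (r-1),
          transition (Gkr k r) (Sum.inr (Sum.inr i)) (Sum.inr (Sum.inr j)) * f (Sum.inr (Sum.inr j)))
          = -(Real.cos θ * g ((i:ℕ)+1)) := by
        have step : (∑ j : Fin (r-1),
            transition (Gkr k r) (Sum.inr (Sum.inr i)) (Sum.inr (Sum.inr j)) * f (Sum.inr (Sum.inr j)))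
            = ∑ j : Fin (r-1),
              -(transition (Gkr k r) (Sum.inr (Sum.inr i)) (Sum.inr (Sum.inr j)) * g ((j:ℕ)+1)) :=
          Finset.sum_congr rfl (fun j _ => by simp only [hf, Sum.elim_inr, mul_neg])
        rw [step, Finset.sum_neg_distrib]
        congr 1
        refine (Finset.sum_congr rfl (fun j _ => ?_)).trans
          (Gkr_key hr θ g hg0 hrec hend _ i rfl)
        simp only [transition, Gkr_adj_qq, Gkr_deg_q,
          Nat.cast_ite, Nat.cast_ofNat, Nat.cast_one, ite_mul, zero_mul]
      rw [s1, s2, s3]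
      simp [hf]
  rw [spectrum.mem_iff]
  intro hU
  have hM : (algebraMap ℝ (Matrix (GkrVertex k r) (GkrVertex k r) ℝ) (Real.cos θ)
      - transition (Gkr k r)) *ᵥ f = 0 := by
    rw [Matrix.sub_mulVec, hmain, Algebra.algebraMap_eq_smul_one, Matrix.smul_mulVec,
      Matrix.one_mulVec]
    exact sub_self _
  have hdet := Matrix.exists_mulVec_eq_zero_iff.mp ⟨f, hfne, hM⟩
  have hu2 := (Matrix.isUnit_iff_isUnit_det _).mp hU
  rw [hdet] at hu2
  exact not_isUnit_zero hu2

end GroverPaper
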